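/- Let v : ℝ × ℝ → ℝ be a smooth function of (x,t) with v_xx(x,t) ≠ 0 for all (x,t), satisfying the evolution equation v_t = −1/v_xx. Define η : ℝ × ℝ → ℝ by η = v_xxx / v_xx³. Then η satisfies the linearized equation ∂η/∂t = ( 1/v_xx² )·∂²η/∂x² at every point (x,t). -/

import Mathlib

/-!
In terms of `s = -1 / v_xx` the equation `v_t = -1 / v_xx` becomes `s_t = s² s_xx` (since
`(v_xx)_t = (v_t)_xx = s_xx`), while `η = -s s_x` and `1 / v_xx² = s²`. So the claim is that
`s s_x` solves `η_t = s² η_xx` whenever `s_t = s² s_xx`; by the product rule and the symmetry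
of mixed partials both sides equal `3 s² s_x s_xx + s³ s_xxx`.
-/

/-- Partial derivative with respect to the first (space) variable. -/
noncomputable def pdx (f : ℝ × ℝ → ℝ) : ℝ × ℝ → ℝ :=
  fun p => deriv (fun x => f (x, p.2)) p.1

/-- Partial derivative with respect to the second (time) variable. -/
noncomputable def pdt (f : ℝ × ℝ → ℝ) : ℝ × ℝ → ℝ :=
  fun p => deriv (fun t => f (p.1, t)) p.2

open scoped ContDiff

section PartialDerivatives

variable {f g : ℝ × ℝ → ℝ} {p : ℝ × ℝ}

theorem DifferentiableAt.hasDerivAt_pdx (hf : DifferentiableAt ℝ f p) :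
    HasDerivAt (fun x => f (x, p.2)) (pdx f p) p.1 :=
  (hf.comp p.1 (differentiableAt_id.prodMk (differentiableAt_const _))).hasDerivAt

theorem DifferentiableAt.hasDerivAt_pdt (hf : DifferentiableAt ℝ f p) :
    HasDerivAt (fun t => f (p.1, t)) (pdt f p) p.2 :=
  (hf.comp p.2 ((differentiableAt_const _).prodMk differentiableAt_id)).hasDerivAt

theorem pdx_eq_fderiv (hf : DifferentiableAt ℝ f p) : pdx f p = fderiv ℝ f p (1, 0) :=
  hf.hasDerivAt_pdx.unique <|
    hf.hasFDerivAt.comp_hasDerivAt p.1 ((hasDerivAt_id p.1).prodMk (hasDerivAt_const p.1 p.2))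

theorem pdt_eq_fderiv (hf : DifferentiableAt ℝ f p) : pdt f p = fderiv ℝ f p (0, 1) :=
  hf.hasDerivAt_pdt.unique <|
    hf.hasFDerivAt.comp_hasDerivAt p.2 ((hasDerivAt_const p.2 p.1).prodMk (hasDerivAt_id p.2))

theorem ContDiff.pdx (hf : ContDiff ℝ ∞ f) : ContDiff ℝ ∞ (pdx f) := by
  have h : _root_.pdx f = fun q => fderiv ℝ f q (1, 0) :=
    funext fun q => pdx_eq_fderiv (hf.differentiable (by simp) q)
  rw [h]
  exact (hf.fderiv_right (m := ∞) (by simp)).clm_apply contDiff_const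

theorem pdt_pdx (hf : ContDiff ℝ 2 f) : pdt (pdx f) = pdx (pdt f) := by
  have hdf : Differentiable ℝ f := hf.differentiable (by norm_num)
  have hdf' : Differentiable ℝ (fderiv ℝ f) :=
    (hf.fderiv_right (m := 1) le_rfl).differentiable one_ne_zero
  have hx : pdx f = fun q => fderiv ℝ f q (1, 0) := funext fun q => pdx_eq_fderiv (hdf q)
  have ht : pdt f = fun q => fderiv ℝ f q (0, 1) := funext fun q => pdt_eq_fderiv (hdf q)
  funext p
  have hsymm := hf.contDiffAt.isSymmSndFDerivAt (x := p) (by simp) (1, 0) (0, 1)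
  rw [hx, ht, pdt_eq_fderiv ((hdf' p).clm_apply (differentiableAt_const _)),
    pdx_eq_fderiv ((hdf' p).clm_apply (differentiableAt_const _)),
    fderiv_clm_apply (hdf' p) (differentiableAt_const _),
    fderiv_clm_apply (hdf' p) (differentiableAt_const _)]
  simpa using hsymm.symm

theorem pdx_neg : pdx (fun q => -f q) = fun q => -pdx f q :=
  funext fun _ => deriv.fun_neg

theorem pdt_neg : pdt (fun q => -f q) = fun q => -pdt f q :=
  funext fun _ => deriv.fun_neg

theorem pdx_add (hf : Differentiable ℝ f) (hg : Differentiable ℝ g) :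
    pdx (fun q => f q + g q) = fun q => pdx f q + pdx g q :=
  funext fun p => ((hf p).hasDerivAt_pdx.add (hg p).hasDerivAt_pdx).deriv

theorem pdx_mul (hf : Differentiable ℝ f) (hg : Differentiable ℝ g) :
    pdx (fun q => f q * g q) = fun q => pdx f q * g q + f q * pdx g q :=
  funext fun p => ((hf p).hasDerivAt_pdx.mul (hg p).hasDerivAt_pdx).deriv

theorem pdt_mul (hf : Differentiable ℝ f) (hg : Differentiable ℝ g) :
    pdt (fun q => f q * g q) = fun q => pdt f q * g q + f q * pdt g q :=
  funext fun p => ((hf p).hasDerivAt_pdt.mul (hg p).hasDerivAt_pdt).deriv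

theorem pdx_pow (hf : Differentiable ℝ f) (n : ℕ) :
    pdx (fun q => f q ^ n) = fun q => n * f q ^ (n - 1) * pdx f q :=
  funext fun p => ((hf p).hasDerivAt_pdx.pow n).deriv

theorem pdx_inv (hf : Differentiable ℝ f) (hf0 : ∀ q, f q ≠ 0) :
    pdx (fun q => (f q)⁻¹) = fun q => -pdx f q / f q ^ 2 :=
  funext fun p => ((hf p).hasDerivAt_pdx.inv (hf0 p)).deriv

theorem pdt_inv (hf : Differentiable ℝ f) (hf0 : ∀ q, f q ≠ 0) :
    pdt (fun q => (f q)⁻¹) = fun q => -pdt f q / f q ^ 2 :=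
  funext fun p => ((hf p).hasDerivAt_pdt.inv (hf0 p)).deriv

end PartialDerivatives

theorem pdt_neg_inv_eq_sq_mul_pdx_pdx {w : ℝ × ℝ → ℝ} (hw : Differentiable ℝ w)
    (hw0 : ∀ p, w p ≠ 0) (hwt : pdt w = pdx (pdx fun p => -(w p)⁻¹)) :
    pdt (fun p => -(w p)⁻¹) = fun p => (-(w p)⁻¹) ^ 2 * pdx (pdx fun p => -(w p)⁻¹) p := by
  rw [pdt_neg, pdt_inv hw hw0, hwt]
  funext p
  ring

theorem pdt_mul_pdx_of_pdt_eq_sq_mul_pdx_pdx {s : ℝ × ℝ → ℝ} (hs : ContDiff ℝ ∞ s)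
    (hst : pdt s = fun p => s p ^ 2 * pdx (pdx s) p) :
    pdt (fun p => s p * pdx s p) = fun p => s p ^ 2 * pdx (pdx fun p => s p * pdx s p) p := by
  have hd : Differentiable ℝ s := hs.differentiable (by simp)
  have hd₁ : Differentiable ℝ (pdx s) := hs.pdx.differentiable (by simp)
  have hd₂ : Differentiable ℝ (pdx (pdx s)) := hs.pdx.pdx.differentiable (by simp)
  have hsxt : pdt (pdx s) =
      fun p => 2 * s p * pdx s p * pdx (pdx s) p + s p ^ 2 * pdx (pdx (pdx s)) p := by
    rw [pdt_pdx (hs.of_le ENat.LEInfty.out), hst, pdx_mul (by fun_prop) hd₂, pdx_pow hd]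
    funext p
    push_cast
    ring
  rw [pdt_mul hd hd₁, hsxt, hst, pdx_mul hd hd₁, pdx_add (by fun_prop) (by fun_prop),
    pdx_mul hd₁ hd₁, pdx_mul hd hd₂]
  funext p
  ring

/-- Case 2: for a solution of `v_t = −1/v_xx`, the function `η = v_xxx / v_xx³`
satisfies the linearized (Lie–Bäcklund symmetry) equation. -/
theorem case2_third_order_symmetry
    (v : ℝ × ℝ → ℝ) (hv : ContDiff ℝ (⊤ : ℕ∞) v)
    (hvxx : ∀ p : ℝ × ℝ, pdx (pdx v) p ≠ 0)
    (heq : ∀ p : ℝ × ℝ, pdt v p = -1 / pdx (pdx v) p)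
    (η : ℝ × ℝ → ℝ)
    (hη : η = fun p => pdx (pdx (pdx v)) p / (pdx (pdx v) p) ^ 3) :
    ∀ p : ℝ × ℝ, pdt η p = (1 / (pdx (pdx v) p) ^ 2) * pdx (pdx η) p := by
  have hw : ContDiff ℝ ∞ (pdx (pdx v)) := hv.pdx.pdx
  have hw' : Differentiable ℝ (pdx (pdx v)) := hw.differentiable (by simp)
  obtain ⟨s, hs_def⟩ : ∃ s : ℝ × ℝ → ℝ, s = fun p => -(pdx (pdx v) p)⁻¹ := ⟨_, rfl⟩
  have hs : ContDiff ℝ ∞ s := hs_def ▸ (hw.inv hvxx).neg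
  have hvt : pdt v = s := funext fun p => by rw [heq, hs_def, neg_div, one_div]
  have hst : pdt s = fun p => s p ^ 2 * pdx (pdx s) p := by
    have hwt : pdt (pdx (pdx v)) = pdx (pdx s) := by
      rw [pdt_pdx (hv.pdx.of_le ENat.LEInfty.out), pdt_pdx (hv.of_le ENat.LEInfty.out), hvt]
    subst hs_def
    exact pdt_neg_inv_eq_sq_mul_pdx_pdx hw' hvxx hwt
  have hη_s : η = fun p => -(s p * pdx s p) := by
    rw [hη, hs_def, pdx_neg, pdx_inv hw' hvxx]
    funext p
    field_simp [hvxx p]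
  intro p
  rw [hη_s, pdt_neg, pdx_neg, pdx_neg, pdt_mul_pdx_of_pdt_eq_sq_mul_pdx_pdx hs hst,
    hs_def]
  field_simp
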